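/- arXiv:2106.05597 — 3 statements merged into one kernel-verified Lean document; each statement's English description precedes it below -/
import Mathlib

section
/- Let A be an n×n real symmetric positive definite matrix and B an n×n real symmetric positive semidefinite matrix with A ⪰ B. Then for every vector y in the column space (range) of B, yᵀ A⁻¹ y ≤ yᵀ B† y, where B† denotes the Moore–Penrose pseudoinverse of B. -/
/-!
Write `y = B x`. Any generalized inverse `G` of the symmetric matrix `B` (`B G B = B`) gives
`yᵀ G y = xᵀ B x`. On the other side, with `w = A⁻¹ y` we have `wᵀ B w ≤ wᵀ A w = wᵀ y`, and
positivity of `B` on `x - w` gives `2 wᵀ y - wᵀ B w ≤ xᵀ B x`; together `yᵀ A⁻¹ y = wᵀ y ≤ xᵀ B x`.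
-/

open Matrix
open scoped Classical

/-- `G` satisfies the four Penrose conditions for `M`, i.e. `G` is the
Moore–Penrose pseudoinverse of `M`. -/
def IsMoorePenrose {D n : ℕ} (M : Matrix (Fin D) (Fin n) ℝ)
    (G : Matrix (Fin n) (Fin D) ℝ) : Prop :=
  M * G * M = M ∧ G * M * G = G ∧ (M * G)ᵀ = M * G ∧ (G * M)ᵀ = G * M

/-- The Moore–Penrose pseudoinverse `M†` of a real matrix `M`, defined as the
(unique) matrix satisfying the four Penrose conditions. -/
noncomputable def pinv {D n : ℕ} (M : Matrix (Fin D) (Fin n) ℝ) :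
    Matrix (Fin n) (Fin D) ℝ :=
  if h : ∃ G, IsMoorePenrose M G then h.choose else 0

lemma isMoorePenrose_pinv {D n : ℕ} {M : Matrix (Fin D) (Fin n) ℝ}
    (h : ∃ G, IsMoorePenrose M G) : IsMoorePenrose M (pinv M) := by
  rw [pinv, dif_pos h]
  exact h.choose_spec

-- Since `0⁻¹ = 0` in `ℝ`, `cfc (·⁻¹) B` inverts `B` on its range and vanishes on its kernel.
lemma Matrix.IsHermitian.isMoorePenrose_cfc_inv {n : ℕ} {B : Matrix (Fin n) (Fin n) ℝ}
    (hB : B.IsHermitian) :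
    IsMoorePenrose B (cfc (·⁻¹ : ℝ → ℝ) B) := by
  have hB : IsSelfAdjoint B := hB
  have hc : ∀ f : ℝ → ℝ, ContinuousOn f (spectrum ℝ B) :=
    fun f => B.finite_real_spectrum.continuousOn f
  have hmul : ∀ f g : ℝ → ℝ, cfc f B * cfc g B = cfc (fun x => f x * g x) B :=
    fun f g => (cfc_mul f g B (hc f) (hc g)).symm
  have hmul_left : ∀ f : ℝ → ℝ, B * cfc f B = cfc (fun x => x * f x) B := fun f => by
    rw [← hmul, cfc_id' ℝ B]
  have hmul_right : ∀ f : ℝ → ℝ, cfc f B * B = cfc (fun x => f x * x) B := fun f => by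
    rw [← hmul, cfc_id' ℝ B]
  have htr : ∀ f : ℝ → ℝ, (cfc f B)ᵀ = cfc f B := fun f => by
    rw [← conjTranspose_eq_transpose_of_trivial]; exact cfc_predicate f B
  refine ⟨?_, ?_, ?_, ?_⟩
  · rw [hmul_left, hmul_right]
    conv_rhs => rw [← cfc_id' ℝ B]
    exact congrArg (cfc · B) (funext mul_inv_mul_cancel)
  · rw [hmul_right, hmul]
    exact congrArg (cfc · B) (funext fun x => by simpa using mul_inv_mul_cancel x⁻¹)
  · rw [hmul_left, htr]
  · rw [hmul_right, htr]

namespace Matrix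

variable {n : Type*} [Fintype n]

lemma IsHermitian.mulVec_dotProduct {B : Matrix n n ℝ} (hB : B.IsHermitian) (x w : n → ℝ) :
    (B *ᵥ x) ⬝ᵥ w = x ⬝ᵥ B *ᵥ w := by
  rw [dotProduct_mulVec, ← mulVec_transpose, ← conjTranspose_eq_transpose_of_trivial, hB]

lemma IsHermitian.dotProduct_mulVec_comm {B : Matrix n n ℝ} (hB : B.IsHermitian) (x w : n → ℝ) :
    x ⬝ᵥ B *ᵥ w = w ⬝ᵥ B *ᵥ x := by
  rw [← hB.mulVec_dotProduct, dotProduct_comm]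

lemma IsHermitian.dotProduct_mulVec_of_mul_mul_eq_self {B G : Matrix n n ℝ} (hB : B.IsHermitian)
    (hG : B * G * B = B) (x : n → ℝ) :
    (B *ᵥ x) ⬝ᵥ G *ᵥ (B *ᵥ x) = x ⬝ᵥ B *ᵥ x := by
  rw [hB.mulVec_dotProduct, mulVec_mulVec, mulVec_mulVec, hG]

lemma PosSemidef.two_mul_dotProduct_mulVec_sub_le {B : Matrix n n ℝ} (hB : B.PosSemidef)
    (x w : n → ℝ) : 2 * (w ⬝ᵥ B *ᵥ x) - w ⬝ᵥ B *ᵥ w ≤ x ⬝ᵥ B *ᵥ x := by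
  have h := hB.dotProduct_mulVec_nonneg (x - w)
  simp only [star_trivial, mulVec_sub, dotProduct_sub, sub_dotProduct] at h
  linarith [hB.isHermitian.dotProduct_mulVec_comm x w]

variable [DecidableEq n]

lemma PosDef.dotProduct_inv_mulVec_le_of_sub_posSemidef {A B : Matrix n n ℝ} (hA : A.PosDef)
    (hB : B.PosSemidef) (hAB : (A - B).PosSemidef) (x : n → ℝ) :
    (B *ᵥ x) ⬝ᵥ A⁻¹ *ᵥ (B *ᵥ x) ≤ x ⬝ᵥ B *ᵥ x := by
  set y := B *ᵥ x
  set w := A⁻¹ *ᵥ y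
  have hAw : A *ᵥ w = y := by
    rw [mulVec_mulVec, mul_nonsing_inv A (isUnit_iff_ne_zero.mpr hA.det_pos.ne'), one_mulVec]
  have hBw : w ⬝ᵥ B *ᵥ w ≤ w ⬝ᵥ y := by
    have h := hAB.dotProduct_mulVec_nonneg w
    simp only [star_trivial, sub_mulVec, dotProduct_sub, hAw] at h
    linarith
  calc y ⬝ᵥ w = 2 * (w ⬝ᵥ B *ᵥ x) - w ⬝ᵥ y := by rw [dotProduct_comm]; ring
    _ ≤ 2 * (w ⬝ᵥ B *ᵥ x) - w ⬝ᵥ B *ᵥ w := by linarith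
    _ ≤ x ⬝ᵥ B *ᵥ x := hB.two_mul_dotProduct_mulVec_sub_le x w

end Matrix

/-- If `A` is symmetric positive definite, `B` symmetric positive
semidefinite, `A ⪰ B`, then for every `y` in the column space of `B`,
`yᵀ A⁻¹ y ≤ yᵀ B† y`. -/
theorem stmt1 (n : ℕ) (A B : Matrix (Fin n) (Fin n) ℝ)
    (hA : A.PosDef) (hB : B.PosSemidef) (hAB : (A - B).PosSemidef) :
    ∀ y : Fin n → ℝ, (∃ x, B.mulVec x = y) →
      y ⬝ᵥ (A⁻¹.mulVec y) ≤ y ⬝ᵥ ((pinv B).mulVec y) := by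
  rintro y ⟨x, rfl⟩
  have hpinv : B * pinv B * B = B :=
    (isMoorePenrose_pinv ⟨_, hB.isHermitian.isMoorePenrose_cfc_inv⟩).1
  rw [hB.isHermitian.dotProduct_mulVec_of_mul_mul_eq_self hpinv]
  exact hA.dotProduct_inv_mulVec_le_of_sub_posSemidef hB hAB x
end

section
/- Let X be a d×n real matrix with columns x₁,…,x_n, let γ, β ∈ ℝ^d, α ∈ ℝ, and define y ∈ ℝ^n by y_s = α·(x_sᵀγ)·(x_sᵀβ) for each s. If H is an n×n real symmetric positive definite matrix with H ⪰ (1/(2π))·(XᵀX)^{∘2}, then yᵀ H⁻¹ y ≤ 2π·α²·‖γ‖₂²·‖β‖₂². -/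
/-!
Let `Φ` be the Khatri–Rao square of `X`, the `d² × n` matrix with columns `x_s ⊗ x_s`. Then
`(XᵀX)^{∘2} = ΦᵀΦ` and `y = α Φᵀ (γ ⊗ β)`. For `z = H⁻¹y` the quantity `q = yᵀH⁻¹y` equals both
`zᵀHz ≥ ‖Φz‖² / (2π)` and `α (γ ⊗ β)ᵀ Φz`, so Cauchy–Schwarz gives `q² ≤ 2π α² ‖γ‖² ‖β‖² q`.
-/

open Matrix Real

def hadamardPow {m n : ℕ} (A : Matrix (Fin m) (Fin n) ℝ) (k : ℕ) :
    Matrix (Fin m) (Fin n) ℝ :=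
  Matrix.of fun i j => (A i j) ^ k

namespace Matrix

variable {ι ι' n R : Type*} [Fintype ι] [Fintype ι']

def vecKronecker [Mul R] (u : ι → R) (v : ι' → R) : ι × ι' → R :=
  fun p => u p.1 * v p.2

def khatriRao [Mul R] (A : Matrix ι n R) (B : Matrix ι' n R) : Matrix (ι × ι') n R :=
  of fun p s => A p.1 s * B p.2 s

theorem khatriRao_transpose_mul_khatriRao [CommSemiring R] (A C : Matrix ι n R)
    (B D : Matrix ι' n R) : (khatriRao A B)ᵀ * khatriRao C D = (Aᵀ * C) ⊙ (Bᵀ * D) := by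
  ext s t
  simp only [mul_apply, transpose_apply, khatriRao, of_apply, hadamard_apply,
    Fintype.sum_prod_type, Fintype.sum_mul_sum]
  exact Finset.sum_congr rfl fun i _ => Finset.sum_congr rfl fun j _ => by ring

theorem vecKronecker_vecMul_khatriRao [CommSemiring R] (u : ι → R) (v : ι' → R)
    (A : Matrix ι n R) (B : Matrix ι' n R) :
    vecKronecker u v ᵥ* khatriRao A B = (u ᵥ* A) * (v ᵥ* B) := by
  ext s
  simp only [vecMul, dotProduct, vecKronecker, khatriRao, of_apply, Pi.mul_apply,
    Fintype.sum_prod_type, Fintype.sum_mul_sum]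
  exact Finset.sum_congr rfl fun i _ => Finset.sum_congr rfl fun j _ => by ring

theorem vecKronecker_dotProduct_vecKronecker [CommSemiring R] (u u' : ι → R) (v v' : ι' → R) :
    vecKronecker u v ⬝ᵥ vecKronecker u' v' = (u ⬝ᵥ u') * (v ⬝ᵥ v') := by
  simp only [dotProduct, vecKronecker, Fintype.sum_prod_type, Fintype.sum_mul_sum]
  exact Finset.sum_congr rfl fun i _ => Finset.sum_congr rfl fun j _ => by ring

variable [Fintype n]

theorem dotProduct_sq_le [CommRing R] [LinearOrder R] [IsStrictOrderedRing R] (v w : n → R) :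
    (v ⬝ᵥ w) ^ 2 ≤ (v ⬝ᵥ v) * (w ⬝ᵥ w) := by
  simpa only [dotProduct, sq] using Finset.sum_mul_sq_le_sq_mul_sq Finset.univ v w

theorem vecMul_dotProduct_inv_mulVec_vecMul_le [DecidableEq n] {H : Matrix n n ℝ}
    (hH : H.PosDef) {Φ : Matrix ι n ℝ} {c : ℝ} (hc : 0 < c)
    (hΦ : (H - c • (Φᵀ * Φ)).PosSemidef) (v : ι → ℝ) :
    (v ᵥ* Φ) ⬝ᵥ H⁻¹ *ᵥ (v ᵥ* Φ) ≤ (v ⬝ᵥ v) / c := by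
  set z := H⁻¹ *ᵥ (v ᵥ* Φ)
  have hHz : H *ᵥ z = v ᵥ* Φ := by
    rw [mulVec_mulVec, mul_nonsing_inv _ ((isUnit_iff_isUnit_det H).mp hH.isUnit), one_mulVec]
  have hquad : c * (Φ *ᵥ z ⬝ᵥ Φ *ᵥ z) ≤ (v ᵥ* Φ) ⬝ᵥ z := by
    have h := hΦ.dotProduct_mulVec_nonneg z
    rw [← hHz, dotProduct_comm (H *ᵥ z)]
    simpa only [star_trivial, sub_mulVec, smul_mulVec, dotProduct_sub, dotProduct_smul,
      smul_eq_mul, sub_nonneg, ← mulVec_mulVec, dotProduct_mulVec z Φᵀ, vecMul_transpose] using h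
  have hcs : ((v ᵥ* Φ) ⬝ᵥ z) ^ 2 ≤ (v ⬝ᵥ v) * (Φ *ᵥ z ⬝ᵥ Φ *ᵥ z) := by
    rw [← dotProduct_mulVec]
    exact dotProduct_sq_le v (Φ *ᵥ z)
  have hq : 0 ≤ (v ᵥ* Φ) ⬝ᵥ z := (mul_nonneg hc.le (dotProduct_self_star_nonneg _)).trans hquad
  have hv : 0 ≤ v ⬝ᵥ v := by simpa only [star_trivial] using dotProduct_self_star_nonneg v
  rw [le_div_iff₀ hc]
  nlinarith [mul_le_mul_of_nonneg_left hquad hv, mul_le_mul_of_nonneg_left hcs hc.le]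

end Matrix

/-- with `y_s = α·(x_sᵀγ)·(x_sᵀβ)` (where `x_s` is the `s`-th
column of `X`), if `H` is symmetric positive definite with
`H ⪰ (1/(2π))·(XᵀX)^{∘2}`, then `yᵀ H⁻¹ y ≤ 2π·α²·‖γ‖₂²·‖β‖₂²`. -/
theorem stmt9 (d n : ℕ) (X : Matrix (Fin d) (Fin n) ℝ) (γ β : Fin d → ℝ)
    (α : ℝ) (y : Fin n → ℝ)
    (hy : ∀ s, y s = α * ((fun i => X i s) ⬝ᵥ γ) * ((fun i => X i s) ⬝ᵥ β))
    (H : Matrix (Fin n) (Fin n) ℝ) (hH : H.PosDef)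
    (hLoewner : (H - (1 / (2 * π)) • hadamardPow (Xᵀ * X) 2).PosSemidef) :
    y ⬝ᵥ (H⁻¹.mulVec y)
      ≤ 2 * π * α ^ 2 * (∑ i, (γ i) ^ 2) * (∑ i, (β i) ^ 2) := by
  have hK : hadamardPow (Xᵀ * X) 2 = (khatriRao X X)ᵀ * khatriRao X X := by
    rw [khatriRao_transpose_mul_khatriRao]
    ext s t
    simp only [hadamardPow, of_apply, hadamard_apply, sq]
  have hy' : y = vecKronecker (α • γ) β ᵥ* khatriRao X X := by
    ext s
    rw [vecKronecker_vecMul_khatriRao, hy, Pi.mul_apply, smul_vecMul, Pi.smul_apply, smul_eq_mul]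
    simp only [vecMul, dotProduct_comm γ, dotProduct_comm β]
  rw [hK] at hLoewner
  subst hy'
  refine (vecMul_dotProduct_inv_mulVec_vecMul_le hH (by positivity) hLoewner _).trans_eq ?_
  rw [vecKronecker_dotProduct_vecKronecker, smul_dotProduct, dotProduct_smul]
  simp only [smul_eq_mul, dotProduct, ← sq]
  field_simp
end

section
/- Let X be a d×n real matrix with columns x₁,…,x_n, let γ, β ∈ ℝ^d, α ∈ ℝ, p a positive integer, and define y ∈ ℝ^n by y_s = α·(x_sᵀγ)·(x_sᵀβ)^p for each s. If H is an n×n real symmetric positive definite matrix with H ⪰ (1/(2π p²))·(XᵀX)^{∘(p+1)}, then yᵀ H⁻¹ y ≤ 2π·p²·α²·‖γ‖₂²·‖β‖₂^{2p}. -/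
open Matrix Real

section TensorProduct

variable {R κ ι : Type*} [CommSemiring R] [Fintype κ] [DecidableEq κ] [Fintype ι]

/-- The rank-one tensor `⨂ j, u j`, as a function of multi-indices `κ → ι`. -/
def rankOneTensor (u : κ → ι → R) : (κ → ι) → R :=
  fun f => ∏ j, u j (f j)

lemma rankOneTensor_dotProduct (u w : κ → ι → R) :
    rankOneTensor u ⬝ᵥ rankOneTensor w = ∏ j, u j ⬝ᵥ w j := by
  simp only [dotProduct, rankOneTensor, ← Finset.prod_mul_distrib]
  exact (Fintype.prod_sum fun j i => u j i * w j i).symm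

end TensorProduct

lemma Matrix.PosDef.dotProduct_inv_mulVec_le_of_posSemidef_sub_gram
    {m ι : Type*} [Fintype m] [DecidableEq m] [Fintype ι]
    {H : Matrix m m ℝ} (hH : H.PosDef) (Φ : Matrix ι m ℝ) {c : ℝ} (hc : 0 < c)
    (hle : (H - (1 / c) • (Φᵀ * Φ)).PosSemidef) (v : ι → ℝ) :
    (Φᵀ *ᵥ v) ⬝ᵥ (H⁻¹ *ᵥ (Φᵀ *ᵥ v)) ≤ c * (v ⬝ᵥ v) := by
  set y := Φᵀ *ᵥ v
  set z := H⁻¹ *ᵥ y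
  have hz : H *ᵥ z = y := by
    rw [mulVec_mulVec, mul_nonsing_inv H (isUnit_iff_ne_zero.mpr hH.det_pos.ne'), one_mulVec]
  set Q := y ⬝ᵥ z
  have hQ : Q = z ⬝ᵥ H *ᵥ z := by rw [hz, dotProduct_comm]
  have hQ_nonneg : 0 ≤ Q := hQ ▸ hH.posSemidef.dotProduct_mulVec_nonneg z
  have hQ_feature : Q = (Φ *ᵥ z) ⬝ᵥ v := by
    rw [dotProduct_comm, dotProduct_mulVec, ← mulVec_transpose]
  have hgram : (Φ *ᵥ z) ⬝ᵥ (Φ *ᵥ z) ≤ c * Q := by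
    have h := hle.dotProduct_mulVec_nonneg z
    rw [star_trivial, sub_mulVec, dotProduct_sub, smul_mulVec, dotProduct_smul, smul_eq_mul,
      ← hQ, ← mulVec_mulVec, dotProduct_mulVec z Φᵀ, vecMul_transpose, one_div] at h
    exact (inv_mul_le_iff₀ hc).mp (sub_nonneg.mp h)
  have hCS : Q ^ 2 ≤ ((Φ *ᵥ z) ⬝ᵥ (Φ *ᵥ z)) * (v ⬝ᵥ v) := by
    simpa only [hQ_feature, dotProduct, ← sq] using
      Finset.sum_mul_sq_le_sq_mul_sq Finset.univ (Φ *ᵥ z) v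
  have hv : 0 ≤ v ⬝ᵥ v := Finset.sum_nonneg fun i _ => mul_self_nonneg (v i)
  nlinarith [mul_le_mul_of_nonneg_right hgram hv, mul_nonneg hc.le hv]

section TensorPowFeatures

variable {R ι m : Type*} [CommSemiring R] [Fintype ι]

def tensorPowFeatures (X : Matrix ι m R) (k : ℕ) : Matrix (Fin k → ι) m R :=
  Matrix.of fun f s => rankOneTensor (fun _ => Xᵀ s) f

lemma transpose_tensorPowFeatures_mulVec_rankOneTensor (X : Matrix ι m R) {k : ℕ}
    (u : Fin k → ι → R) (s : m) :
    ((tensorPowFeatures X k)ᵀ *ᵥ rankOneTensor u) s = ∏ j, Xᵀ s ⬝ᵥ u j :=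
  rankOneTensor_dotProduct _ u

lemma transpose_tensorPowFeatures_mul_self [Fintype m] (X : Matrix ι m R) (k : ℕ) :
    (tensorPowFeatures X k)ᵀ * tensorPowFeatures X k =
      Matrix.of fun s t => ((Xᵀ * X) s t) ^ k := by
  ext s t
  simp only [mul_apply', of_apply]
  exact (rankOneTensor_dotProduct _ _).trans (Fin.prod_const k _)

end TensorPowFeatures

/-- with `y_s = α·(x_sᵀγ)·(x_sᵀβ)^p` (where `x_s` is the `s`-th
column of `X`), if `H` is symmetric positive definite with
`H ⪰ (1/(2πp²))·(XᵀX)^{∘(p+1)}`, then `yᵀ H⁻¹ y ≤ 2π·p²·α²·‖γ‖₂²·‖β‖₂^{2p}`. -/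
theorem stmt10 (d n : ℕ) (X : Matrix (Fin d) (Fin n) ℝ) (γ β : Fin d → ℝ)
    (α : ℝ) (p : ℕ) (hp : 0 < p) (y : Fin n → ℝ)
    (hy : ∀ s, y s = α * ((fun i => X i s) ⬝ᵥ γ) * ((fun i => X i s) ⬝ᵥ β) ^ p)
    (H : Matrix (Fin n) (Fin n) ℝ) (hH : H.PosDef)
    (hLoewner :
      (H - (1 / (2 * π * (p : ℝ) ^ 2)) • hadamardPow (Xᵀ * X) (p + 1)).PosSemidef) :
    y ⬝ᵥ (H⁻¹.mulVec y)
      ≤ 2 * π * (p : ℝ) ^ 2 * α ^ 2 * (∑ i, (γ i) ^ 2) * (∑ i, (β i) ^ 2) ^ p := by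
  set u : Fin (p + 1) → Fin d → ℝ := Fin.cons γ fun _ => β
  have hy_features : y = (tensorPowFeatures X (p + 1))ᵀ *ᵥ (α • rankOneTensor u) := by
    ext s
    rw [hy, mulVec_smul, Pi.smul_apply, transpose_tensorPowFeatures_mulVec_rankOneTensor,
      Fin.prod_univ_succ]
    simp only [u, Fin.cons_zero, Fin.cons_succ, Finset.prod_const, Finset.card_univ,
      Fintype.card_fin, mul_assoc]
    rfl
  have hc : 0 < 2 * π * (p : ℝ) ^ 2 := by positivity
  have hK : hadamardPow (Xᵀ * X) (p + 1)
      = (tensorPowFeatures X (p + 1))ᵀ * tensorPowFeatures X (p + 1) :=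
    (transpose_tensorPowFeatures_mul_self X (p + 1)).symm
  rw [hK] at hLoewner
  calc y ⬝ᵥ H⁻¹ *ᵥ y
        ≤ 2 * π * (p : ℝ) ^ 2 * ((α • rankOneTensor u) ⬝ᵥ (α • rankOneTensor u)) :=
        hy_features ▸ hH.dotProduct_inv_mulVec_le_of_posSemidef_sub_gram _ hc hLoewner _
    _ = _ := by
      rw [smul_dotProduct, dotProduct_smul, rankOneTensor_dotProduct, Fin.prod_univ_succ]
      simp only [sq, dotProduct, Fin.cons_zero, Fin.cons_succ, Finset.prod_const,
        Finset.card_univ, Fintype.card_fin, smul_eq_mul, u]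
      ring
end
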